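/- Let 𝕐 be a reflexive separable Banach space and q ∈ (1,∞). If a sequence (μ_n) in P_q(𝕐) converges to μ in the topology σ(P_q(𝕐), C_q^w(𝕐)), then sup_n ∫ ‖y‖^q dμ_n < ∞. -/

import Mathlib

open MeasureTheory Filter Topology ENNReal

/-- Sequential convergence with respect to the weak topology of a Banach space. -/
def WeakSeqTendsto {Y : Type*} [NormedAddCommGroup Y] [NormedSpace ℝ Y]
    (y : ℕ → Y) (y₀ : Y) : Prop :=
  ∀ f : Y →L[ℝ] ℝ, Tendsto (fun k => f (y k)) atTop (𝓝 (f y₀))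

/-- A sequentially weakly continuous real function. -/
def SeqWeakCont {Y : Type*} [NormedAddCommGroup Y] [NormedSpace ℝ Y]
    (f : Y → ℝ) : Prop :=
  ∀ (y : ℕ → Y) (y₀ : Y), WeakSeqTendsto y y₀ →
    Tendsto (fun k => f (y k)) atTop (𝓝 (f y₀))

/-!
Take a sequence `(e h)` in the dual unit ball with `‖y‖ = sup_h |e h y|` (separability) and
`ζ k y = normPowApprox e q k y = (max_{h ≤ k} |e h y|) ^ q ⊓ k`, so that `ζ k y → ‖y‖ ^ q`.
Instead of applying the uniform boundedness principle to the `μ n` as functionals on `C_q^w`,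
apply it on `ℓ¹` to `T n a = ∑ a k ∫ ζ k dμ n`: the series `∑ a k ζ k` is sequentially weakly
continuous (weakly convergent sequences are bounded) and `o(‖y‖ ^ q)`, so `T n a` converges by
hypothesis. Hence `∫ ζ k dμ n` is bounded uniformly in `n` and `k`, and Fatou's lemma bounds
`∫ ‖y‖ ^ q dμ n`.
-/

theorem partialSups_abs_nonneg (f : ℕ → ℝ) (k : ℕ) : 0 ≤ partialSups (fun h => |f h|) k :=
  (abs_nonneg (f k)).trans (le_partialSups (fun h => |f h|) k)

theorem exists_abs_tsum_le_add_mul {X : Type*} {f : ℕ → X → ℝ} {b B : ℕ → ℝ} {g : X → ℝ}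
    (hb : Summable b) (hg : 0 ≤ g) (hfb : ∀ k x, |f k x| ≤ b k * g x)
    (hfB : ∀ k x, |f k x| ≤ B k) {ε : ℝ} (hε : 0 < ε) :
    ∃ A, 0 ≤ A ∧ ∀ x, |∑' k, f k x| ≤ A + ε * g x := by
  obtain ⟨K, hK⟩ : ∃ K, ∑' k, b (k + K) < ε :=
    ((tendsto_sum_nat_add b).eventually (gt_mem_nhds hε)).exists
  refine ⟨∑ k ∈ Finset.range K, |B k|, Finset.sum_nonneg fun k _ => abs_nonneg _, fun x => ?_⟩
  have hsum : Summable fun k => ‖f k x‖ :=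
    .of_nonneg_of_le (fun k => abs_nonneg _) (hfb · x) (hb.mul_right (g x))
  have hhead : ∑ k ∈ Finset.range K, |f k x| ≤ ∑ k ∈ Finset.range K, |B k| :=
    Finset.sum_le_sum fun k _ => (hfB k x).trans (le_abs_self _)
  have htail : ∑' k, |f (k + K) x| ≤ ε * g x :=
    calc ∑' k, |f (k + K) x| ≤ ∑' k, b (k + K) * g x :=
          Summable.tsum_le_tsum (fun k => hfb _ x) ((summable_nat_add_iff K).2 hsum)
            ((summable_nat_add_iff K).2 (hb.mul_right (g x)))
      _ ≤ ε * g x := by rw [tsum_mul_right]; exact mul_le_mul_of_nonneg_right hK.le (hg x)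
  calc |∑' k, f k x| ≤ ∑' k, |f k x| := norm_tsum_le_tsum_norm hsum
    _ = ∑ k ∈ Finset.range K, |f k x| + ∑' k, |f (k + K) x| :=
      (hsum.sum_add_tsum_nat_add K).symm
    _ ≤ ∑ k ∈ Finset.range K, |B k| + ε * g x := add_le_add hhead htail

theorem integral_tsum_of_abs_le_mul {X ι : Type*} [Countable ι] [MeasurableSpace X]
    {μ : Measure X} {f : ι → X → ℝ} {b : ι → ℝ} {g : X → ℝ}
    (hf : ∀ k, AEStronglyMeasurable (f k) μ) (hb : Summable b) (hg : Integrable g μ)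
    (hfb : ∀ k x, |f k x| ≤ b k * g x) :
    ∫ x, ∑' k, f k x ∂μ = ∑' k, ∫ x, f k x ∂μ := by
  have hdom k x : ‖f k x‖ ≤ |b k| * ‖g x‖ :=
    (hfb k x).trans ((le_abs_self _).trans (abs_mul _ _).le)
  have hint k : Integrable (f k) μ := (hg.norm.const_mul |b k|).mono' (hf k) (.of_forall (hdom k))
  refine (integral_tsum_of_summable_integral_norm hint ?_).symm
  refine .of_nonneg_of_le (fun k => integral_nonneg fun x => norm_nonneg _) (fun k => ?_)
    (hb.abs.mul_right (∫ x, ‖g x‖ ∂μ))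
  calc ∫ x, ‖f k x‖ ∂μ ≤ ∫ x, |b k| * ‖g x‖ ∂μ :=
        integral_mono (hint k).norm (hg.norm.const_mul _) (hdom k)
    _ = |b k| * ∫ x, ‖g x‖ ∂μ := integral_const_mul _ _

theorem lintegral_ofReal_le_of_tendsto {X : Type*} [MeasurableSpace X] {μ : Measure X}
    {f : ℕ → X → ℝ} {F : X → ℝ} (hf : ∀ k, Integrable (f k) μ) (hf₀ : ∀ k, 0 ≤ᵐ[μ] f k)
    (hF : ∀ᵐ x ∂μ, Tendsto (f · x) atTop (𝓝 (F x))) {C : ℝ} (hC : ∀ k, ∫ x, f k x ∂μ ≤ C) :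
    ∫⁻ x, ENNReal.ofReal (F x) ∂μ ≤ ENNReal.ofReal C :=
  calc ∫⁻ x, ENNReal.ofReal (F x) ∂μ
      = ∫⁻ x, liminf (fun k => ENNReal.ofReal (f k x)) atTop ∂μ :=
        lintegral_congr_ae <| hF.mono fun x hx =>
          ((ENNReal.continuous_ofReal.tendsto _).comp hx).liminf_eq.symm
    _ ≤ liminf (fun k => ∫⁻ x, ENNReal.ofReal (f k x) ∂μ) atTop :=
        lintegral_liminf_le' fun k => (hf k).aemeasurable.ennreal_ofReal
    _ = liminf (fun k => ENNReal.ofReal (∫ x, f k x ∂μ)) atTop := by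
        simp only [ofReal_integral_eq_lintegral_ofReal (hf _) (hf₀ _)]
    _ ≤ ENNReal.ofReal C :=
        liminf_le_of_frequently_le' (.of_forall fun k => ENNReal.ofReal_le_ofReal (hC k))

open scoped lp in
theorem exists_abs_le_of_forall_summable_bounded {ι α : Type*} {c : ι → α → ℝ}
    (hc : ∀ n, ∃ M, ∀ k, |c n k| ≤ M)
    (h : ∀ a : α → ℝ, Summable a → ∃ C, ∀ n, |∑' k, a k * c n k| ≤ C) :
    ∃ C, ∀ n k, |c n k| ≤ C := by
  classical
  choose M hM using hc
  have habs (a : ℓ¹(α, ℝ)) : Summable fun k => |a k| := by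
    simpa using (lp.memℓp a).summable (by norm_num)
  have hnorm (a : ℓ¹(α, ℝ)) : ‖a‖ = ∑' k, |a k| := by
    simp [lp.norm_eq_tsum_rpow (show 0 < (1 : ℝ≥0∞).toReal by norm_num)]
  have hdom (a : ℓ¹(α, ℝ)) (n : ι) (k : α) : |a k * c n k| ≤ |a k| * M n := by
    rw [abs_mul]; exact mul_le_mul_of_nonneg_left (hM n k) (abs_nonneg _)
  have hsum (a : ℓ¹(α, ℝ)) (n : ι) : Summable fun k => a k * c n k :=
    .of_norm_bounded ((habs a).mul_right (M n)) (hdom a n)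
  let T (n : ι) : ℓ¹(α, ℝ) →L[ℝ] ℝ := LinearMap.mkContinuous
    { toFun a := ∑' k, a k * c n k
      map_add' a b := by
        simp only [lp.coeFn_add, Pi.add_apply, add_mul]
        exact (hsum a n).tsum_add (hsum b n)
      map_smul' r a := by
        simp only [lp.coeFn_smul, Pi.smul_apply, smul_eq_mul, mul_assoc, RingHom.id_apply]
        exact tsum_mul_left }
    (M n) fun a => by
      rw [hnorm, mul_comm, ← tsum_mul_right]
      exact tsum_of_norm_bounded ((habs a).mul_right (M n)).hasSum (hdom a n)
  obtain ⟨C, hC⟩ := banach_steinhaus (g := T) fun a => h a (lp.memℓp a).summable_of_one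
  refine ⟨C, fun n k => ?_⟩
  let δ : ℓ¹(α, ℝ) := lp.single 1 k 1
  have hδ : ‖δ‖ = 1 := by simp [δ, lp.norm_single]
  have hTδ : T n δ = c n k := by simp [T, δ, lp.single_apply, Pi.single_apply]
  calc |c n k| = ‖T n δ‖ := by rw [hTδ, Real.norm_eq_abs]
    _ ≤ ‖T n‖ * ‖δ‖ := (T n).le_opNorm δ
    _ ≤ C := by simpa [hδ] using hC n

section NormedSpace

variable {Y : Type*} [NormedAddCommGroup Y] [NormedSpace ℝ Y]

theorem WeakSeqTendsto.bddAbove_range_norm {y : ℕ → Y} {y₀ : Y} (hy : WeakSeqTendsto y y₀) :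
    BddAbove (Set.range fun j => ‖y j‖) := by
  obtain ⟨C, hC⟩ := banach_steinhaus (g := fun j => NormedSpace.inclusionInDoubleDualLi ℝ (y j))
    fun f => by
      obtain ⟨C, hC⟩ := (hy f).norm.bddAbove_range
      exact ⟨C, fun j => hC ⟨j, rfl⟩⟩
  refine ⟨C, ?_⟩
  rintro _ ⟨j, rfl⟩
  simpa only [LinearIsometry.norm_map] using hC j

theorem SeqWeakCont.const_mul {f : Y → ℝ} (hf : SeqWeakCont f) (c : ℝ) :
    SeqWeakCont fun y => c * f y :=
  fun y y₀ hy => (hf y y₀ hy).const_mul c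

theorem SeqWeakCont.tsum {ι : Type*} {f : ι → Y → ℝ} (hf : ∀ k, SeqWeakCont (f k)) {b : ι → ℝ}
    (hb : Summable b) {q : ℝ} (hq : 0 ≤ q) (hfb : ∀ k y, |f k y| ≤ b k * ‖y‖ ^ q) :
    SeqWeakCont fun y => ∑' k, f k y := by
  intro y y₀ hy
  obtain ⟨R, hR⟩ := hy.bddAbove_range_norm
  refine tendsto_tsum_of_dominated_convergence (hb.abs.mul_right (R ^ q))
    (fun k => hf k y y₀ hy) (.of_forall fun j k => ?_)
  calc ‖f k (y j)‖ ≤ b k * ‖y j‖ ^ q := hfb k (y j)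
    _ ≤ |b k| * ‖y j‖ ^ q := by gcongr; exact le_abs_self _
    _ ≤ |b k| * R ^ q := by gcongr; exact hR ⟨j, rfl⟩

def IsNormingSeq (e : ℕ → StrongDual ℝ Y) : Prop :=
  ∀ y, IsLUB (Set.range fun h => |e h y|) ‖y‖

theorem exists_isNormingSeq [TopologicalSpace.SeparableSpace Y] :
    ∃ e : ℕ → StrongDual ℝ Y, IsNormingSeq e := by
  obtain ⟨d, hd⟩ := TopologicalSpace.exists_dense_seq Y
  choose e he₁ he₂ using fun m => exists_dual_vector'' ℝ (d m)
  have hle m (y : Y) : |e m y| ≤ ‖y‖ := by simpa using (e m).le_of_opNorm_le (he₁ m) y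
  refine ⟨e, fun y => ⟨?_, fun u hu => le_of_forall_pos_le_add fun ε hε => ?_⟩⟩
  · rintro _ ⟨m, rfl⟩
    exact hle m y
  obtain ⟨m, hm⟩ := hd.exists_dist_lt y (half_pos hε)
  rw [dist_eq_norm] at hm
  have hu' : |e m y| ≤ u := hu ⟨m, rfl⟩
  have hdiff : |e m (d m - y)| ≤ ‖y - d m‖ := norm_sub_rev (d m) y ▸ hle m (d m - y)
  have hdm : ‖d m‖ = e m y + e m (d m - y) := by simpa using (he₂ m).symm
  linarith [norm_le_insert' y (d m), le_abs_self (e m y), le_abs_self (e m (d m - y))]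

noncomputable def normPowApprox (e : ℕ → StrongDual ℝ Y) (q : ℝ) (k : ℕ) (y : Y) : ℝ :=
  min (partialSups (fun h => |e h y|) k ^ q) k

theorem normPowApprox_nonneg (e : ℕ → StrongDual ℝ Y) (q : ℝ) (k : ℕ) (y : Y) :
    0 ≤ normPowApprox e q k y :=
  le_min (Real.rpow_nonneg (partialSups_abs_nonneg (e · y) k) q) k.cast_nonneg

theorem abs_mul_normPowApprox_le_natCast (a : ℝ) (e : ℕ → StrongDual ℝ Y) (q : ℝ) (k : ℕ)
    (y : Y) : |a * normPowApprox e q k y| ≤ |a| * k := by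
  rw [abs_mul, abs_of_nonneg (normPowApprox_nonneg e q k y)]
  exact mul_le_mul_of_nonneg_left (min_le_right _ _) (abs_nonneg a)

theorem continuous_normPowApprox (e : ℕ → StrongDual ℝ Y) {q : ℝ} (hq : 0 ≤ q) (k : ℕ) :
    Continuous (normPowApprox e q k) :=
  ((Continuous.partialSups_apply fun h _ => (e h).continuous.abs).rpow_const
    fun _ => Or.inr hq).min continuous_const

theorem seqWeakCont_normPowApprox (e : ℕ → StrongDual ℝ Y) {q : ℝ} (hq : 0 ≤ q) (k : ℕ) :
    SeqWeakCont (normPowApprox e q k) :=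
  fun _ _ hy => ((Tendsto.partialSups_apply fun h _ => (hy (e h)).abs).rpow_const
    (Or.inr hq)).min tendsto_const_nhds

variable {e : ℕ → StrongDual ℝ Y} {q : ℝ}

namespace IsNormingSeq

theorem partialSups_abs_rpow_le (he : IsNormingSeq e) (hq : 0 ≤ q) (k : ℕ) (y : Y) :
    partialSups (fun h => |e h y|) k ^ q ≤ ‖y‖ ^ q :=
  Real.rpow_le_rpow (partialSups_abs_nonneg (e · y) k)
    (partialSups_le _ _ _ fun h _ => (he y).1 ⟨h, rfl⟩) hq

theorem normPowApprox_le (he : IsNormingSeq e) (hq : 0 ≤ q) (k : ℕ) (y : Y) :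
    normPowApprox e q k y ≤ ‖y‖ ^ q :=
  (min_le_left _ _).trans (he.partialSups_abs_rpow_le hq k y)

theorem tendsto_normPowApprox (he : IsNormingSeq e) (hq : 0 ≤ q) (y : Y) :
    Tendsto (fun k => normPowApprox e q k y) atTop (𝓝 (‖y‖ ^ q)) := by
  have hsup : Tendsto (fun k => partialSups (fun h => |e h y|) k) atTop (𝓝 ‖y‖) :=
    tendsto_atTop_isLUB (partialSups_monotone _) <| by
      simpa only [IsLUB, upperBounds_range_partialSups] using he y
  refine (hsup.rpow_const (Or.inr hq)).congr' ?_
  filter_upwards [tendsto_natCast_atTop_atTop.eventually_ge_atTop (‖y‖ ^ q)] with k hk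
  exact (min_eq_left ((he.partialSups_abs_rpow_le hq k y).trans hk)).symm

theorem abs_mul_normPowApprox_le (he : IsNormingSeq e) (hq : 0 ≤ q) (a : ℝ) (k : ℕ) (y : Y) :
    |a * normPowApprox e q k y| ≤ |a| * ‖y‖ ^ q := by
  rw [abs_mul, abs_of_nonneg (normPowApprox_nonneg e q k y)]
  exact mul_le_mul_of_nonneg_left (he.normPowApprox_le hq k y) (abs_nonneg a)

theorem seqWeakCont_tsum_mul_normPowApprox (he : IsNormingSeq e) (hq : 0 ≤ q) {a : ℕ → ℝ}
    (ha : Summable a) : SeqWeakCont fun y => ∑' k, a k * normPowApprox e q k y :=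
  .tsum (fun k => (seqWeakCont_normPowApprox e hq k).const_mul (a k)) ha.abs hq
    fun k => he.abs_mul_normPowApprox_le hq (a k) k

theorem exists_abs_tsum_mul_normPowApprox_le (he : IsNormingSeq e) (hq : 0 ≤ q) {a : ℕ → ℝ}
    (ha : Summable a) {ε : ℝ} (hε : 0 < ε) :
    ∃ A, 0 ≤ A ∧ ∀ y, |∑' k, a k * normPowApprox e q k y| ≤ A + ε * ‖y‖ ^ q :=
  exists_abs_tsum_le_add_mul ha.abs (fun y => by positivity)
    (fun k => he.abs_mul_normPowApprox_le hq (a k) k)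
    (fun k => abs_mul_normPowApprox_le_natCast (a k) e q k) hε

variable [MeasurableSpace Y] [OpensMeasurableSpace Y] {μ : Measure Y}

theorem integrable_normPowApprox (he : IsNormingSeq e) (hq : 0 ≤ q)
    (hμ : Integrable (fun y => ‖y‖ ^ q) μ) (k : ℕ) : Integrable (normPowApprox e q k) μ :=
  hμ.mono' (continuous_normPowApprox e hq k).aestronglyMeasurable <| .of_forall fun y => by
    simpa only [one_mul, abs_one, Real.norm_eq_abs] using he.abs_mul_normPowApprox_le hq 1 k y

theorem abs_integral_normPowApprox_le (he : IsNormingSeq e) (hq : 0 ≤ q)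
    (hμ : Integrable (fun y => ‖y‖ ^ q) μ) (k : ℕ) :
    |∫ y, normPowApprox e q k y ∂μ| ≤ ∫ y, ‖y‖ ^ q ∂μ := by
  rw [abs_of_nonneg (integral_nonneg (normPowApprox_nonneg e q k))]
  exact integral_mono (he.integrable_normPowApprox hq hμ k) hμ (he.normPowApprox_le hq k)

theorem integral_tsum_mul_normPowApprox (he : IsNormingSeq e) (hq : 0 ≤ q) {a : ℕ → ℝ}
    (ha : Summable a) (hμ : Integrable (fun y => ‖y‖ ^ q) μ) :
    ∫ y, ∑' k, a k * normPowApprox e q k y ∂μ = ∑' k, a k * ∫ y, normPowApprox e q k y ∂μ := by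
  simp only [integral_tsum_of_abs_le_mul
    (fun k => ((continuous_normPowApprox e hq k).const_mul (a k)).aestronglyMeasurable) ha.abs hμ
    (fun k => he.abs_mul_normPowApprox_le hq (a k) k), integral_const_mul]

end IsNormingSeq

end NormedSpace

theorem moment_bound_of_Pqw_convergence_general
    {Y : Type*} [NormedAddCommGroup Y] [NormedSpace ℝ Y]
    [TopologicalSpace.SeparableSpace Y] [MeasurableSpace Y] [BorelSpace Y]
    (q : ℝ) (hq : 1 < q)
    (μs : ℕ → Measure Y) (μ : Measure Y)
    (hmom : ∀ n, ∫⁻ y, ENNReal.ofReal (‖y‖ ^ q) ∂(μs n) < ⊤)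
    (hconv : ∀ ζ : Y → ℝ, SeqWeakCont ζ →
      (∀ ε : ℝ, 0 < ε → ∃ A : ℝ, 0 ≤ A ∧ ∀ y, |ζ y| ≤ A + ε * ‖y‖ ^ q) →
      Tendsto (fun n => ∫ y, ζ y ∂(μs n)) atTop (𝓝 (∫ y, ζ y ∂μ))) :
    ∃ C : ℝ≥0∞, C ≠ ⊤ ∧ ∀ n, ∫⁻ y, ENNReal.ofReal (‖y‖ ^ q) ∂(μs n) ≤ C := by
  obtain ⟨e, he⟩ := exists_isNormingSeq (Y := Y)
  have hq₀ : 0 ≤ q := by linarith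
  have hint n : Integrable (fun y => ‖y‖ ^ q) (μs n) :=
    ⟨(continuous_norm.rpow_const fun _ => Or.inr hq₀).aestronglyMeasurable,
      (hasFiniteIntegral_iff_ofReal (.of_forall fun y => by positivity)).2 (hmom n)⟩
  have hbdd (a : ℕ → ℝ) (ha : Summable a) :
      ∃ C, ∀ n, |∑' k, a k * ∫ y, normPowApprox e q k y ∂μs n| ≤ C := by
    obtain ⟨C, hC⟩ := (hconv _ (he.seqWeakCont_tsum_mul_normPowApprox hq₀ ha)
      fun ε hε => he.exists_abs_tsum_mul_normPowApprox_le hq₀ ha hε).abs.bddAbove_range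
    refine ⟨C, fun n => ?_⟩
    simpa only [he.integral_tsum_mul_normPowApprox hq₀ ha (hint n)] using hC ⟨n, rfl⟩
  obtain ⟨C, hC⟩ := exists_abs_le_of_forall_summable_bounded
    (fun n => ⟨_, he.abs_integral_normPowApprox_le hq₀ (hint n)⟩) hbdd
  refine ⟨ENNReal.ofReal C, ofReal_ne_top, fun n => ?_⟩
  exact lintegral_ofReal_le_of_tendsto (he.integrable_normPowApprox hq₀ (hint n))
    (fun k => .of_forall (normPowApprox_nonneg e q k))
    (.of_forall (he.tendsto_normPowApprox hq₀)) fun k => (le_abs_self _).trans (hC n k)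

theorem moment_bound_of_Pqw_convergence
    {Y : Type*} [NormedAddCommGroup Y] [NormedSpace ℝ Y]
    [TopologicalSpace.SeparableSpace Y] [MeasurableSpace Y] [BorelSpace Y]
    (hrefl : Function.Surjective (NormedSpace.inclusionInDoubleDual ℝ Y))
    (q : ℝ) (hq : 1 < q)
    (μs : ℕ → Measure Y) (μ : Measure Y)
    (hprob : ∀ n, IsProbabilityMeasure (μs n)) [IsProbabilityMeasure μ]
    (hmom : ∀ n, ∫⁻ y, ENNReal.ofReal (‖y‖ ^ q) ∂(μs n) < ⊤)
    (hmomμ : ∫⁻ y, ENNReal.ofReal (‖y‖ ^ q) ∂μ < ⊤)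
    (hconv : ∀ ζ : Y → ℝ, SeqWeakCont ζ →
      (∀ ε : ℝ, 0 < ε → ∃ A : ℝ, 0 ≤ A ∧ ∀ y, |ζ y| ≤ A + ε * ‖y‖ ^ q) →
      Tendsto (fun n => ∫ y, ζ y ∂(μs n)) atTop (𝓝 (∫ y, ζ y ∂μ))) :
    ∃ C : ℝ≥0∞, C ≠ ⊤ ∧ ∀ n, ∫⁻ y, ENNReal.ofReal (‖y‖ ^ q) ∂(μs n) ≤ C :=
  moment_bound_of_Pqw_convergence_general q hq μs μ hmom hconv
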